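/- Let C ≥ 2 and M > C. Fix an index m ∈ [M] and a client distribution π^m ∈ ℝ^C. Let ε ∈ [0,1]^C be a per-class error-rate vector with ‖ε‖₁ = Σ_{i=1}^C ε_i = ε*, and suppose ε does NOT have all coordinates equal (i.e., there exist i ≠ j with ε_i ≠ ε_j). Then there exist client distributions π̂^n ∈ ℝ^C for each n ∈ [M] \ {m} such that the risk of ε over the distributions π̂^1, …, π̂^{m-1}, π^m, π̂^{m+1}, …, π̂^M is strictly greater than ε*/C; that is, (1/M)·(ε · π^m + Σ_{n ≠ m} ε · π̂^n) > ε*/C. Since a model whose error-rate vector has all coordinates equal to ε*/C has risk exactly ε*/C over every choice of client distributions, this shows the equal-error model achieves strictly smaller risk than ε on this set of client distributions. -/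
import Mathlib


/-- Theorem 1 of the paper: Let `C ≥ 2`, `M > C`, fix `m ∈ [M]` and a
client distribution `π^m`. If `ε ∈ [0,1]^C` has total error `ε*` and is not
constant, then there exist client distributions `π̂^n` for `n ≠ m` (realized as a
family `π̂ : Fin M → ℝ^C` with `π̂ m = π^m`) on which the risk of `ε` is strictly
greater than `ε*/C`. -/
theorem stmt_1 (C M : ℕ) (hC : 2 ≤ C) (hM : C < M)
    (m : Fin M) (πm : Fin C → ℝ)
    (hπm0 : ∀ k, 0 ≤ πm k) (hπm1 : ∑ k, πm k = 1)
    (ε : Fin C → ℝ) (hε0 : ∀ i, 0 ≤ ε i) (hε1 : ∀ i, ε i ≤ 1)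
    (εstar : ℝ) (hsum : ∑ i, ε i = εstar)
    (hne : ∃ i j : Fin C, i ≠ j ∧ ε i ≠ ε j) :
    ∃ πhat : Fin M → Fin C → ℝ,
      πhat m = πm ∧
      (∀ n, ∀ k, 0 ≤ πhat n k) ∧
      (∀ n, ∑ k, πhat n k = 1) ∧
      (1 / (M : ℝ)) * ∑ n : Fin M, ∑ k : Fin C, ε k * πhat n k
        > εstar / (C : ℝ) := by
  have hCpos : (0 : ℝ) < C := by exact_mod_cast Nat.lt_of_lt_of_le Nat.zero_lt_two hC
  have hMpos : (0 : ℝ) < M := by exact_mod_cast (by omega : 0 < M)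
  have hCne : Nonempty (Fin C) := ⟨⟨0, by omega⟩⟩
  -- argmax i0 and argmin j0 of ε
  obtain ⟨i0, -, hi0⟩ := Finset.exists_max_image Finset.univ ε ⟨Classical.arbitrary (Fin C), Finset.mem_univ _⟩
  obtain ⟨j0, -, hj0⟩ := Finset.exists_min_image Finset.univ ε ⟨Classical.arbitrary (Fin C), Finset.mem_univ _⟩
  have hmax : ∀ k, ε k ≤ ε i0 := fun k => hi0 k (Finset.mem_univ k)
  have hmin : ∀ k, ε j0 ≤ ε k := fun k => hj0 k (Finset.mem_univ k)
  have hlt : ε j0 < ε i0 := by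
    obtain ⟨i, j, -, hij⟩ := hne
    rcases lt_or_gt_of_ne hij with h | h
    · exact lt_of_le_of_lt (hmin i) (lt_of_lt_of_le h (hmax j))
    · exact lt_of_le_of_lt (hmin j) (lt_of_lt_of_le h (hmax i))
  refine ⟨fun n => if n = m then πm else (fun k => if k = i0 then 1 else 0), by simp, ?_, ?_, ?_⟩
  · intro n k
    by_cases h : n = m <;> simp [h]
    · exact hπm0 k
    · positivity
  · intro n
    by_cases h : n = m <;> simp [h, hπm1]
  · -- compute the inner sums
    have hinner : ∀ n : Fin M, (∑ k : Fin C, ε k *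
        (if n = m then πm else (fun k => if k = i0 then 1 else 0)) k)
        = if n = m then (∑ k, ε k * πm k) else ε i0 := by
      intro n
      by_cases h : n = m <;> simp [h]
    rw [Finset.sum_congr rfl (fun n _ => hinner n), Finset.sum_ite, Finset.sum_const,
      Finset.sum_const, Finset.filter_eq', if_pos (Finset.mem_univ m)]
    have hcard : (Finset.univ.filter (fun n : Fin M => ¬ n = m)).card = M - 1 := by
      simp [Finset.filter_not, Finset.filter_eq', Finset.card_sdiff]
    rw [hcard, Finset.card_singleton, one_smul, nsmul_eq_mul]
    -- key inequalities
    set P := ∑ k, ε k * πm k with hP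
    have h1 : ε j0 ≤ P := by
      calc ε j0 = ∑ k, ε j0 * πm k := by rw [← Finset.mul_sum, hπm1, mul_one]
        _ ≤ P := Finset.sum_le_sum fun k _ => mul_le_mul_of_nonneg_right (hmin k) (hπm0 k)
    have h2 : ε i0 - ε j0 ≤ (C : ℝ) * ε i0 - εstar := by
      have : (C : ℝ) * ε i0 - εstar = ∑ k : Fin C, (ε i0 - ε k) := by
        rw [Finset.sum_sub_distrib, hsum, Finset.sum_const, Finset.card_univ, Fintype.card_fin,
          nsmul_eq_mul]
      rw [this]
      exact Finset.single_le_sum (f := fun k => ε i0 - ε k)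
        (fun k _ => sub_nonneg.mpr (hmax k)) (Finset.mem_univ j0)
    have h3 : εstar - (C : ℝ) * ε j0 < (C : ℝ) * (ε i0 - ε j0) := by
      have heq : εstar - (C : ℝ) * ε j0 = ∑ k : Fin C, (ε k - ε j0) := by
        rw [Finset.sum_sub_distrib, hsum, Finset.sum_const, Finset.card_univ, Fintype.card_fin,
          nsmul_eq_mul]
      have heq2 : (C : ℝ) * (ε i0 - ε j0) = ∑ _k : Fin C, (ε i0 - ε j0) := by
        rw [Finset.sum_const, Finset.card_univ, Fintype.card_fin, nsmul_eq_mul]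
      rw [heq, heq2]
      exact Finset.sum_lt_sum (fun k _ => by linarith [hmax k])
        ⟨j0, Finset.mem_univ j0, by linarith⟩
    have hM1 : (C : ℝ) ≤ (M : ℝ) - 1 := by
      have : (C : ℝ) + 1 ≤ (M : ℝ) := by exact_mod_cast hM
      linarith
    have hMcast : ((M - 1 : ℕ) : ℝ) = (M : ℝ) - 1 := by
      have : 1 ≤ M := by omega
      push_cast [this]; ring
    rw [hMcast, gt_iff_lt, div_lt_iff₀ hCpos, one_div, inv_mul_eq_div, div_mul_eq_mul_div,
      lt_div_iff₀ hMpos]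
    -- goal: εstar * M < (P + (M-1) * ε i0) * C  (roughly)
    nlinarith [mul_le_mul_of_nonneg_right hM1 (le_of_lt (sub_pos.mpr hlt)),
      mul_le_mul_of_nonneg_left h2 (by linarith : (0:ℝ) ≤ (M:ℝ) - 1)]
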